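/- Let a, ã ∈ ℂ, let t, t̃ > 0 and c > 0 be real numbers. If c ≤ 2·Re(conj(ã)·a)/t̃ − (|ã|²/t̃²)·t, then t ≤ |a|²/c. (The approximated constraint implies the original SINR constraint.) -/

import Mathlib

/-!
The surrogate is the first-order Taylor expansion at `(ã, t̃)` of the jointly convex
quadratic-over-linear function `|a|² / t`, hence a global under-estimator of it. Concretely, with
`r = |ã| / |t̃|` the surrogate is at most `2 r |a| - r² t`, and `(2 r |a| - r² t) t = |a|² - (|a| - r t)²`.
-/

theorem le_sq_div_of_le_two_mul_sub_sq_mul {x r t c : ℝ} (hc : 0 < c)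
    (h : c ≤ 2 * r * x - r ^ 2 * t) : t ≤ x ^ 2 / c := by
  rw [le_div_iff₀ hc]
  rcases le_or_gt 0 t with ht | ht
  · nlinarith [mul_le_mul_of_nonneg_right h ht, sq_nonneg (x - r * t)]
  · nlinarith [sq_nonneg x]

theorem Complex.re_conj_mul_div_le (a a' : ℂ) (s : ℝ) :
    (starRingEnd ℂ a' * a).re / s ≤ ‖a'‖ / |s| * ‖a‖ :=
  calc (starRingEnd ℂ a' * a).re / s
      ≤ |(starRingEnd ℂ a' * a).re| / |s| := (le_abs_self _).trans (abs_div _ _).le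
    _ ≤ ‖starRingEnd ℂ a' * a‖ / |s| := by gcongr; exact Complex.abs_re_le_norm _
    _ = ‖a'‖ / |s| * ‖a‖ := by rw [norm_mul, Complex.norm_conj]; ring

theorem inner_approximation_implies_sinr_general
    (a a' : ℂ) (t t' c : ℝ) (hc : 0 < c)
    (hcon : c ≤ 2 * ((starRingEnd ℂ) a' * a).re / t' - ‖a'‖ ^ 2 / t' ^ 2 * t) :
    t ≤ ‖a‖ ^ 2 / c := by
  apply le_sq_div_of_le_two_mul_sub_sq_mul (r := ‖a'‖ / |t'|) hc
  have hr_sq : ‖a'‖ ^ 2 / t' ^ 2 = (‖a'‖ / |t'|) ^ 2 := by rw [div_pow, sq_abs]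
  have hre := Complex.re_conj_mul_div_le a a' t'
  rw [mul_div_assoc, hr_sq] at hcon
  linarith

/-- The approximated (inner-convex) constraint implies the original SINR
    constraint: if c ≤ 2·Re(conj(ã)·a)/t̃ − (|ã|²/t̃²)·t then t ≤ |a|²/c.
    (Here `a'` plays the role of ã and `t'` of t̃.) -/
theorem inner_approximation_implies_sinr
    (a a' : ℂ) (t t' c : ℝ) (ht : 0 < t) (ht' : 0 < t') (hc : 0 < c)
    (hcon : c ≤ 2 * ((starRingEnd ℂ) a' * a).re / t' - ‖a'‖ ^ 2 / t' ^ 2 * t) :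
    t ≤ ‖a‖ ^ 2 / c :=
  inner_approximation_implies_sinr_general a a' t t' c hc hcon
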